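/- arXiv:2504.04069 — 5 statements merged into one kernel-verified Lean document; each statement's English description precedes it below -/
import Mathlib

section
/- Let A ∈ ℝ^{m×n} with m ≥ n and spectral norm ‖A‖ = 1, and let s = rank(AᵀA − I_n). Then s ≤ n − 1 and there exist matrices U ∈ ℝ^{(m+s)×m} and V ∈ ℝ^{(m+s)×n}, each with orthonormal columns, such that A = Uᵀ V. -/
/-!
Since `‖A‖ = 1`, the matrix `M = 1 - AᵀA` is positive semidefinite, so `M = BᵀB` for some
`B` with `rank M` rows; stacking `A` over `B` gives `V` with `VᵀV = AᵀA + BᵀB = 1`, while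
`U` stacks the identity over zero. A unit vector `v` with `‖Av‖ = 1`, which exists because the
unit ball is compact, satisfies `vᵀMv = 0`, hence `Mv = 0` and `rank M < n`.
-/

open Matrix

/-- Euclidean norm of a vector in `ℝ^n`. -/
noncomputable def vnorm {n : ℕ} (v : Fin n → ℝ) : ℝ := Real.sqrt (v ⬝ᵥ v)

/-- Spectral norm of a real matrix: the largest value of `‖Av‖` over the unit ball. -/
noncomputable def specNorm {m n : ℕ} (A : Matrix (Fin m) (Fin n) ℝ) : ℝ :=
  sSup {r : ℝ | ∃ v : Fin n → ℝ, vnorm v ≤ 1 ∧ r = vnorm (A.mulVec v)}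

open scoped ComplexOrder

section SpectralNorm

variable {m n : ℕ}

lemma vnorm_eq_norm (v : Fin n → ℝ) : vnorm v = ‖WithLp.toLp 2 v‖ := by
  simp [EuclideanSpace.norm_eq, vnorm, dotProduct, sq]

lemma sq_vnorm (v : Fin n → ℝ) : vnorm v ^ 2 = v ⬝ᵥ v :=
  Real.sq_sqrt (Finset.sum_nonneg fun i _ => mul_self_nonneg (v i))

lemma vnorm_smul (c : ℝ) (v : Fin n → ℝ) : vnorm (c • v) = |c| * vnorm v := by
  simp [vnorm_eq_norm, norm_smul]

lemma vnorm_eq_zero {v : Fin n → ℝ} : vnorm v = 0 ↔ v = 0 := by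
  simp [vnorm_eq_norm]

lemma continuous_vnorm : Continuous (vnorm : (Fin n → ℝ) → ℝ) := by
  unfold vnorm
  fun_prop

lemma isCompact_setOf_vnorm_le_one : IsCompact {v : Fin n → ℝ | vnorm v ≤ 1} := by
  convert (isCompact_closedBall (0 : EuclideanSpace ℝ (Fin n)) 1).image (PiLp.continuous_ofLp 2 _)
  ext v
  simp only [Set.mem_ofPred_eq, Set.mem_image, Metric.mem_closedBall, dist_zero_right,
    vnorm_eq_norm]
  exact ⟨fun hv => ⟨_, hv, rfl⟩, by rintro ⟨w, hw, rfl⟩; exact hw⟩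

lemma isCompact_specNorm_set (A : Matrix (Fin m) (Fin n) ℝ) :
    IsCompact {r : ℝ | ∃ v : Fin n → ℝ, vnorm v ≤ 1 ∧ r = vnorm (A *ᵥ v)} := by
  convert isCompact_setOf_vnorm_le_one.image
    (continuous_vnorm.comp A.mulVecLin.continuous_of_finiteDimensional) using 1
  ext r
  simp [eq_comm]

lemma vnorm_mulVec_le_specNorm (A : Matrix (Fin m) (Fin n) ℝ) {v : Fin n → ℝ}
    (hv : vnorm v ≤ 1) : vnorm (A *ᵥ v) ≤ specNorm A :=
  le_csSup (isCompact_specNorm_set A).bddAbove ⟨v, hv, rfl⟩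

lemma exists_vnorm_mulVec_eq_specNorm (A : Matrix (Fin m) (Fin n) ℝ) :
    ∃ v : Fin n → ℝ, vnorm v ≤ 1 ∧ vnorm (A *ᵥ v) = specNorm A := by
  obtain ⟨v, hv, hAv⟩ := (isCompact_specNorm_set A).sSup_mem ⟨_, 0, by simp [vnorm], rfl⟩
  exact ⟨v, hv, hAv.symm⟩

lemma vnorm_mulVec_le (A : Matrix (Fin m) (Fin n) ℝ) (v : Fin n → ℝ) :
    vnorm (A *ᵥ v) ≤ specNorm A * vnorm v := by
  rcases eq_or_ne v 0 with rfl | hv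
  · simp [vnorm]
  have hpos : 0 < vnorm v := (Real.sqrt_nonneg _).lt_of_ne' (vnorm_eq_zero.not.mpr hv)
  have hunit : vnorm ((vnorm v)⁻¹ • v) ≤ 1 := by
    rw [vnorm_smul, abs_of_pos (inv_pos.mpr hpos), inv_mul_cancel₀ hpos.ne']
  have := vnorm_mulVec_le_specNorm A hunit
  rw [mulVec_smul, vnorm_smul, abs_of_pos (inv_pos.mpr hpos), inv_mul_le_iff₀ hpos] at this
  linarith

lemma mulVec_dotProduct_self_le_of_specNorm_le_one {A : Matrix (Fin m) (Fin n) ℝ}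
    (hA : specNorm A ≤ 1) (v : Fin n → ℝ) : (A *ᵥ v) ⬝ᵥ (A *ᵥ v) ≤ v ⬝ᵥ v := by
  rw [← sq_vnorm, ← sq_vnorm]
  have : 0 ≤ vnorm (A *ᵥ v) := Real.sqrt_nonneg _
  gcongr
  calc vnorm (A *ᵥ v) ≤ specNorm A * vnorm v := vnorm_mulVec_le A v
    _ ≤ vnorm v := mul_le_of_le_one_left (Real.sqrt_nonneg _) hA

end SpectralNorm

namespace Matrix

lemma rank_neg {m n R : Type*} [Fintype n] [CommRing R] (M : Matrix m n R) :
    (-M).rank = M.rank := by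
  rw [rank, rank, show (-M).mulVecLin = -M.mulVecLin by ext; simp,
    LinearMap.range_neg]

lemma rank_lt_card_of_mulVec_eq_zero {m n K : Type*} [Fintype n] [Field K]
    {M : Matrix m n K} {v : n → K} (hv : v ≠ 0) (hMv : M *ᵥ v = 0) :
    M.rank < Fintype.card n := by
  have hker : 0 < Module.finrank K (LinearMap.ker M.mulVecLin) :=
    Module.finrank_pos_iff_exists_ne_zero.mpr ⟨⟨v, hMv⟩, Subtype.coe_ne_coe.mp hv⟩
  have := LinearMap.finrank_range_add_finrank_ker M.mulVecLin
  rw [Module.finrank_fintype_fun_eq_card] at this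
  rw [rank]
  omega

section contraction

variable {m n : Type*} [Fintype m] [Fintype n] [DecidableEq n]

lemma dotProduct_one_sub_transpose_mul_self_mulVec {R : Type*} [CommRing R]
    (A : Matrix m n R) (x : n → R) :
    x ⬝ᵥ ((1 - Aᵀ * A) *ᵥ x) = x ⬝ᵥ x - (A *ᵥ x) ⬝ᵥ (A *ᵥ x) := by
  rw [sub_mulVec, dotProduct_sub, one_mulVec, ← mulVec_mulVec, dotProduct_mulVec,
    vecMul_transpose]

variable {A : Matrix m n ℝ} (hA : ∀ x, (A *ᵥ x) ⬝ᵥ (A *ᵥ x) ≤ x ⬝ᵥ x)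
include hA

lemma posSemidef_one_sub_transpose_mul_self : (1 - Aᵀ * A).PosSemidef := by
  have hherm : (1 - Aᵀ * A).IsHermitian := by
    simpa using isHermitian_one.sub (isHermitian_conjTranspose_mul_self A)
  refine .of_dotProduct_mulVec_nonneg hherm fun x => ?_
  rw [star_trivial, dotProduct_one_sub_transpose_mul_self_mulVec]
  linarith [hA x]

lemma one_sub_transpose_mul_self_mulVec_eq_zero {v : n → ℝ}
    (hv : (A *ᵥ v) ⬝ᵥ (A *ᵥ v) = v ⬝ᵥ v) : (1 - Aᵀ * A) *ᵥ v = 0 := by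
  rw [← (posSemidef_one_sub_transpose_mul_self hA).dotProduct_mulVec_zero_iff, star_trivial,
    dotProduct_one_sub_transpose_mul_self_mulVec, hv, sub_self]

end contraction

section factorization

variable {n k r 𝕜 : Type*} [Fintype n] [Fintype r] [RCLike 𝕜]

lemma conjTranspose_mul_self_submatrix_of_row_eq_zero {B : Matrix n k 𝕜} {p : n → Prop}
    [DecidablePred p] (hB : ∀ i, ¬ p i → B i = 0) (e : r ≃ {i // p i}) :
    (B.submatrix (fun j => (e j : n)) id)ᴴ * B.submatrix (fun j => (e j : n)) id = Bᴴ * B := by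
  ext a b
  simp only [mul_apply, conjTranspose_apply, submatrix_apply, id_eq]
  rw [e.sum_comp (fun i : {i // p i} => star (B i a) * B i b),
    ← Fintype.sum_subtype_add_sum_subtype p]
  refine (add_eq_left.mpr (Finset.sum_eq_zero fun i _ => ?_)).symm
  simp [hB i i.2]

/-- `M = (D Qᴴ)ᴴ (D Qᴴ)` for `D` the diagonal of square roots of the eigenvalues and `Q` the
eigenvector unitary; the rows of `D Qᴴ` at zero eigenvalues vanish and are dropped. -/
lemma PosSemidef.exists_conjTranspose_mul_self_eq [DecidableEq n] {M : Matrix n n 𝕜}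
    (hM : M.PosSemidef) : ∃ B : Matrix (Fin M.rank) n 𝕜, Bᴴ * B = M := by
  set Q : Matrix n n 𝕜 := ↑hM.1.eigenvectorUnitary
  set D : Matrix n n 𝕜 := diagonal fun i => (Real.sqrt (hM.1.eigenvalues i) : 𝕜)
  have hD : Dᴴ * D = diagonal (RCLike.ofReal ∘ hM.1.eigenvalues) := by
    simp only [D, diagonal_conjTranspose, diagonal_mul_diagonal]
    congr 1
    ext i
    rw [Function.comp_apply, ← Real.mul_self_sqrt (hM.eigenvalues_nonneg i), RCLike.ofReal_mul]
    simp
  have hfactor : (D * Qᴴ)ᴴ * (D * Qᴴ) = M := by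
    rw [conjTranspose_mul, conjTranspose_conjTranspose, mul_assoc, ← mul_assoc Dᴴ, hD]
    conv_rhs => rw [hM.1.spectral_theorem, Unitary.conjStarAlgAut_apply]
    simp [Q, mul_assoc, star_eq_conjTranspose]
  have hrows : ∀ i, ¬ hM.1.eigenvalues i ≠ 0 → (D * Qᴴ) i = 0 := by
    intro i hi
    ext j
    simp [D, diagonal_mul, not_not.mp hi]
  let e : Fin M.rank ≃ {i // hM.1.eigenvalues i ≠ 0} :=
    (Fintype.equivFinOfCardEq hM.1.rank_eq_card_non_zero_eigs.symm).symm
  exact ⟨_, (conjTranspose_mul_self_submatrix_of_row_eq_zero hrows e).trans hfactor⟩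

end factorization

lemma exists_transpose_mul_eq_of_transpose_mul_self_eq_one_sub {R : Type*} [CommRing R]
    {m n s : ℕ} (A : Matrix (Fin m) (Fin n) R) (B : Matrix (Fin s) (Fin n) R)
    (hB : Bᵀ * B = 1 - Aᵀ * A) :
    ∃ (U : Matrix (Fin (m + s)) (Fin m) R) (V : Matrix (Fin (m + s)) (Fin n) R),
      Uᵀ * U = 1 ∧ Vᵀ * V = 1 ∧ A = Uᵀ * V := by
  refine ⟨(fromRows 1 0).submatrix finSumFinEquiv.symm id,
    (fromRows A B).submatrix finSumFinEquiv.symm id, ?_, ?_, ?_⟩ <;>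
  simp only [transpose_submatrix, submatrix_mul_equiv, transpose_fromRows, fromCols_mul_fromRows,
    submatrix_id_id]
  · simp
  · rw [hB, add_sub_cancel]
  · simp

end Matrix

theorem stmt0_general {m n : ℕ} (A : Matrix (Fin m) (Fin n) ℝ)
    (hA : specNorm A = 1) (s : ℕ) (hs : s = (Aᵀ * A - 1).rank) :
    s ≤ n - 1 ∧
      ∃ (U : Matrix (Fin (m + s)) (Fin m) ℝ) (V : Matrix (Fin (m + s)) (Fin n) ℝ),
        Uᵀ * U = 1 ∧ Vᵀ * V = 1 ∧ A = Uᵀ * V := by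
  have hcontr := mulVec_dotProduct_self_le_of_specNorm_le_one hA.le
  obtain ⟨v, hv, hAv⟩ := exists_vnorm_mulVec_eq_specNorm A
  rw [hA] at hAv
  have hv_eq : (A *ᵥ v) ⬝ᵥ (A *ᵥ v) = v ⬝ᵥ v := by
    refine le_antisymm (hcontr v) ?_
    rw [← sq_vnorm, ← sq_vnorm, hAv, one_pow]
    exact pow_le_one₀ (Real.sqrt_nonneg _) hv
  have hv_ne : v ≠ 0 := by
    rintro rfl
    simp [vnorm] at hAv
  have hs' : s = (1 - Aᵀ * A).rank := by rw [hs, ← rank_neg, neg_sub]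
  have hrank := rank_lt_card_of_mulVec_eq_zero hv_ne
    (one_sub_transpose_mul_self_mulVec_eq_zero hcontr hv_eq)
  obtain ⟨B, hB⟩ := (posSemidef_one_sub_transpose_mul_self hcontr).exists_conjTranspose_mul_self_eq
  rw [Fintype.card_fin] at hrank
  subst hs'
  exact ⟨by omega, exists_transpose_mul_eq_of_transpose_mul_self_eq_one_sub A B
    (by simpa [conjTranspose_eq_transpose_of_trivial] using hB)⟩

/-- Any matrix `A ∈ ℝ^{m×n}` with `m ≥ n` and spectral norm 1 can be decomposed as
`A = Uᵀ V` where `U ∈ ℝ^{(m+s)×m}` and `V ∈ ℝ^{(m+s)×n}` have orthonormal columns and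
`s = rank (AᵀA - Iₙ) ≤ n - 1`. -/
theorem stmt0 {m n : ℕ} (hmn : n ≤ m) (A : Matrix (Fin m) (Fin n) ℝ)
    (hA : specNorm A = 1) (s : ℕ) (hs : s = (Aᵀ * A - 1).rank) :
    s ≤ n - 1 ∧
      ∃ (U : Matrix (Fin (m + s)) (Fin m) ℝ) (V : Matrix (Fin (m + s)) (Fin n) ℝ),
        Uᵀ * U = 1 ∧ Vᵀ * V = 1 ∧ A = Uᵀ * V :=
  stmt0_general A hA s hs
end

section
/- Let A ∈ ℝ^{m×n} be nonzero with m ≥ n, let P ⊆ ℝ^m and Q ⊆ ℝ^n be closed convex cones containing nonzero vectors, and let U, V be matrices with orthonormal columns such that A/‖A‖ = Uᵀ V. Then the optimal value of SV(A,P,Q) equals ‖A‖ times the optimal value of MA(UP, VQ), where UP = {Uu : u ∈ P} and VQ = {Vv : v ∈ Q}. That is, min{⟨u,Av⟩ : u ∈ P, ‖u‖ = 1, v ∈ Q, ‖v‖ = 1} = ‖A‖ · min{⟨x,y⟩ : x ∈ UP, ‖x‖ = 1, y ∈ VQ, ‖y‖ = 1}. -/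
open Matrix
open scoped Matrix.Norms.L2Operator Pointwise

lemma vnorm_eq {n : ℕ} (v : Fin n → ℝ) :
    vnorm v = ‖(EuclideanSpace.equiv (Fin n) ℝ).symm v‖ := by
  rw [vnorm, EuclideanSpace.norm_eq]
  congr 1
  simp [dotProduct, sq]

lemma vnorm_pos {n : ℕ} (v : Fin n → ℝ) (hv : v ≠ 0) : 0 < vnorm v := by
  rw [vnorm_eq]
  rw [norm_pos_iff]
  simpa using hv

lemma specNorm_pos {m n : ℕ} (A : Matrix (Fin m) (Fin n) ℝ) (hA : A ≠ 0) :
    0 < specNorm A := by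
  have hbdd : BddAbove {r : ℝ | ∃ v : Fin n → ℝ, vnorm v ≤ 1 ∧ r = vnorm (A.mulVec v)} := by
    refine ⟨‖A‖, ?_⟩
    rintro r ⟨v, hv, rfl⟩
    calc vnorm (A.mulVec v) = ‖(EuclideanSpace.equiv (Fin m) ℝ).symm (A.mulVec v)‖ :=
          vnorm_eq _
      _ ≤ ‖A‖ * ‖(EuclideanSpace.equiv (Fin n) ℝ).symm v‖ := A.l2_opNorm_mulVec _
      _ ≤ ‖A‖ * 1 := by
          apply mul_le_mul_of_nonneg_left _ (norm_nonneg A)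
          rw [← vnorm_eq]; exact hv
      _ = ‖A‖ := mul_one _
  obtain ⟨i, j, hij⟩ : ∃ i j, A i j ≠ 0 := by
    by_contra h
    push_neg at h
    exact hA (by ext i j; simp [h])
  have hv1 : vnorm (Pi.single j (1:ℝ)) = 1 := by
    rw [vnorm]
    simp [dotProduct, Pi.single_apply]
  have hmem : vnorm (A.mulVec (Pi.single j 1)) ∈
      {r : ℝ | ∃ v : Fin n → ℝ, vnorm v ≤ 1 ∧ r = vnorm (A.mulVec v)} :=
    ⟨Pi.single j 1, le_of_eq hv1, rfl⟩
  have hpos : 0 < vnorm (A.mulVec (Pi.single j 1)) := by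
    apply vnorm_pos
    intro h
    apply hij
    have := congrFun h i
    simpa [Matrix.mulVec_single] using this
  exact lt_of_lt_of_le hpos (le_csSup hbdd hmem)

lemma vnorm_mulVec {d m : ℕ} (U : Matrix (Fin d) (Fin m) ℝ) (hU : Uᵀ * U = 1)
    (u : Fin m → ℝ) : vnorm (U.mulVec u) = vnorm u := by
  unfold vnorm
  congr 1
  rw [Matrix.dotProduct_mulVec, ← Matrix.mulVec_transpose, Matrix.mulVec_mulVec, hU,
    Matrix.one_mulVec]

lemma dot_mulVec_mulVec {d m n : ℕ} (U : Matrix (Fin d) (Fin m) ℝ) (V : Matrix (Fin d) (Fin n) ℝ)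
    (u : Fin m → ℝ) (v : Fin n → ℝ) :
    U.mulVec u ⬝ᵥ V.mulVec v = u ⬝ᵥ (Uᵀ * V).mulVec v := by
  rw [Matrix.dotProduct_mulVec (U.mulVec u), ← Matrix.mulVec_transpose,
    Matrix.mulVec_mulVec]
  rw [Matrix.dotProduct_mulVec u, ← Matrix.mulVec_transpose, Matrix.transpose_mul,
    Matrix.transpose_transpose]


/-- If `A ≠ 0`, `m ≥ n`, `P`, `Q` are closed convex cones containing nonzero vectors, and
`A/‖A‖ = Uᵀ V` with `U`, `V` having orthonormal columns, then the optimal value of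
`SV(A,P,Q)` equals `‖A‖` times the optimal value of `MA(UP, VQ)`. -/
theorem stmt1 {m n d : ℕ} (hmn : n ≤ m) (A : Matrix (Fin m) (Fin n) ℝ) (hA : A ≠ 0)
    (P : Set (Fin m → ℝ)) (Q : Set (Fin n → ℝ))
    (hPclosed : IsClosed P) (hPconvex : Convex ℝ P)
    (hPcone : ∀ c : ℝ, 0 ≤ c → ∀ x ∈ P, c • x ∈ P) (hPne : ∃ x ∈ P, x ≠ 0)
    (hQclosed : IsClosed Q) (hQconvex : Convex ℝ Q)
    (hQcone : ∀ c : ℝ, 0 ≤ c → ∀ y ∈ Q, c • y ∈ Q) (hQne : ∃ y ∈ Q, y ≠ 0)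
    (U : Matrix (Fin d) (Fin m) ℝ) (V : Matrix (Fin d) (Fin n) ℝ)
    (hU : Uᵀ * U = 1) (hV : Vᵀ * V = 1)
    (hUV : (specNorm A)⁻¹ • A = Uᵀ * V) :
    sInf {r : ℝ | ∃ u ∈ P, ∃ v ∈ Q, vnorm u = 1 ∧ vnorm v = 1 ∧ r = u ⬝ᵥ A.mulVec v} =
      specNorm A *
        sInf {r : ℝ | ∃ x ∈ {x | ∃ u ∈ P, x = U.mulVec u},
          ∃ y ∈ {y | ∃ v ∈ Q, y = V.mulVec v},
          vnorm x = 1 ∧ vnorm y = 1 ∧ r = x ⬝ᵥ y} := by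
  have ha : 0 < specNorm A := specNorm_pos A hA
  have hdot : ∀ (u : Fin m → ℝ) (v : Fin n → ℝ),
      U.mulVec u ⬝ᵥ V.mulVec v = (specNorm A)⁻¹ * (u ⬝ᵥ A.mulVec v) := by
    intro u v
    rw [dot_mulVec_mulVec, ← hUV, Matrix.smul_mulVec, dotProduct_smul, smul_eq_mul]
  have hset : {r : ℝ | ∃ x ∈ {x | ∃ u ∈ P, x = U.mulVec u},
          ∃ y ∈ {y | ∃ v ∈ Q, y = V.mulVec v},
          vnorm x = 1 ∧ vnorm y = 1 ∧ r = x ⬝ᵥ y} =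
      (specNorm A)⁻¹ •
        ({r : ℝ | ∃ u ∈ P, ∃ v ∈ Q, vnorm u = 1 ∧ vnorm v = 1 ∧ r = u ⬝ᵥ A.mulVec v} : Set ℝ) := by
    ext r
    simp only [Set.mem_setOf_eq, Set.mem_smul_set, smul_eq_mul]
    constructor
    · rintro ⟨x, ⟨u, hu, rfl⟩, y, ⟨v, hv, rfl⟩, hx1, hy1, rfl⟩
      rw [vnorm_mulVec U hU] at hx1
      rw [vnorm_mulVec V hV] at hy1
      exact ⟨u ⬝ᵥ A.mulVec v, ⟨u, hu, v, hv, hx1, hy1, rfl⟩, (hdot u v).symm⟩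
    · rintro ⟨b, ⟨u, hu, v, hv, hu1, hv1, rfl⟩, rfl⟩
      refine ⟨U.mulVec u, ⟨u, hu, rfl⟩, V.mulVec v, ⟨v, hv, rfl⟩, ?_, ?_, (hdot u v).symm⟩
      · rw [vnorm_mulVec U hU]; exact hu1
      · rw [vnorm_mulVec V hV]; exact hv1
  rw [hset, Real.sInf_smul_of_nonneg (by positivity), smul_eq_mul, ← mul_assoc,
    mul_inv_cancel₀ ha.ne', one_mul]
end

section
/- Let A ∈ ℝ^{m×n}, and let P, Q be the polyhedral cones generated by the matrices G ∈ ℝ^{m×p} and H ∈ ℝ^{n×q} with unit-norm columns. If every entry of Gᵀ A H is nonnegative, then the optimal value of SV(A,P,Q) equals the minimum entry of Gᵀ A H, i.e. min{⟨u,Av⟩ : u ∈ P, ‖u‖ = 1, v ∈ Q, ‖v‖ = 1} = min_{i,j} ⟨g_i, A h_j⟩, and this minimum is attained at a pair (g_i, h_j) of generator columns of G and H. -/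
open Matrix

/-- The polyhedral cone generated by the columns of `G`. -/
def coneOf {m p : ℕ} (G : Matrix (Fin m) (Fin p) ℝ) : Set (Fin m → ℝ) :=
  {u | ∃ x : Fin p → ℝ, (∀ i, 0 ≤ x i) ∧ u = G.mulVec x}

/-- `(u,v)` is an optimal solution of the problem `SV(A,P,Q)`:
minimize `⟨u, Av⟩` over unit vectors `u ∈ P`, `v ∈ Q`. -/
def IsOptSV {m n : ℕ} (A : Matrix (Fin m) (Fin n) ℝ) (P : Set (Fin m → ℝ))
    (Q : Set (Fin n → ℝ)) (u : Fin m → ℝ) (v : Fin n → ℝ) : Prop :=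
  u ∈ P ∧ vnorm u = 1 ∧ v ∈ Q ∧ vnorm v = 1 ∧
    ∀ u' ∈ P, ∀ v' ∈ Q, vnorm u' = 1 → vnorm v' = 1 →
      u ⬝ᵥ A.mulVec v ≤ u' ⬝ᵥ A.mulVec v'

/-!
Proof idea. Write `M = Gᵀ A H` and let `c = M i j` be its least entry. A unit vector `G x` of the
cone has `1 = ‖G x‖ ≤ ∑ xₐ` by the triangle inequality, since the columns of `G` are unit vectors;
likewise `1 ≤ ∑ y_b` for `H y`. Hence `⟨G x, A H y⟩ = xᵀ M y ≥ c (∑ xₐ)(∑ y_b) ≥ c`, the last step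
because `c ≥ 0`, while the generator pair `(gᵢ, hⱼ)` attains the value `c`.
-/

lemma vnorm_eq_norm_toLp {m : ℕ} (v : Fin m → ℝ) : vnorm v = ‖WithLp.toLp 2 v‖ := by
  simp [vnorm, EuclideanSpace.norm_eq, dotProduct, sq]

lemma vnorm_mulVec_le_s3 {m p : ℕ} (G : Matrix (Fin m) (Fin p) ℝ) (x : Fin p → ℝ) :
    vnorm (G *ᵥ x) ≤ ∑ i, |x i| * vnorm (G.col i) := by
  have hsum : WithLp.toLp 2 (G *ᵥ x) = ∑ i, x i • WithLp.toLp 2 (G.col i) := by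
    ext k
    simp [Matrix.mulVec, dotProduct, mul_comm]
  simp only [vnorm_eq_norm_toLp, hsum]
  refine (norm_sum_le _ _).trans_eq (Finset.sum_congr rfl fun i _ => ?_)
  rw [norm_smul, Real.norm_eq_abs]

lemma vnorm_mulVec_le_sum_of_nonneg {m p : ℕ} {G : Matrix (Fin m) (Fin p) ℝ}
    (hG : ∀ j, vnorm (G.col j) = 1) {x : Fin p → ℝ} (hx : ∀ i, 0 ≤ x i) :
    vnorm (G *ᵥ x) ≤ ∑ i, x i := by
  simpa only [hG, mul_one, abs_of_nonneg (hx _)] using vnorm_mulVec_le_s3 G x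

lemma col_mem_coneOf {m p : ℕ} (G : Matrix (Fin m) (Fin p) ℝ) (i : Fin p) :
    G.col i ∈ coneOf G := by
  classical
  exact ⟨Pi.single i 1, fun k => by by_cases h : k = i <;> simp [h],
    (G.mulVec_single_one i).symm⟩

section MatrixAlgebra

variable {R ι κ μ ν : Type*} [CommSemiring R] [Fintype ι] [Fintype κ] [Fintype μ] [Fintype ν]
  (A : Matrix ι κ R) (G : Matrix ι μ R) (H : Matrix κ ν R)

lemma mulVec_dotProduct_mulVec_mulVec (x : μ → R) (y : ν → R) :
    G *ᵥ x ⬝ᵥ A *ᵥ (H *ᵥ y) = x ⬝ᵥ (Gᵀ * A * H) *ᵥ y := by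
  rw [dotProduct_mulVec x, ← vecMul_vecMul, ← vecMul_vecMul, vecMul_transpose,
    ← dotProduct_mulVec, ← dotProduct_mulVec]

lemma col_dotProduct_mulVec_col [DecidableEq μ] [DecidableEq ν] (i : μ) (j : ν) :
    G.col i ⬝ᵥ A *ᵥ H.col j = (Gᵀ * A * H) i j := by
  rw [← G.mulVec_single_one, ← H.mulVec_single_one, mulVec_dotProduct_mulVec_mulVec,
    mulVec_single_one, single_one_dotProduct]
  rfl

end MatrixAlgebra

lemma mul_sum_mul_sum_le_dotProduct_mulVec {p q : ℕ} {M : Matrix (Fin p) (Fin q) ℝ} {c : ℝ}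
    (hc : ∀ a b, c ≤ M a b) {x : Fin p → ℝ} {y : Fin q → ℝ} (hx : ∀ a, 0 ≤ x a)
    (hy : ∀ b, 0 ≤ y b) :
    c * ((∑ a, x a) * ∑ b, y b) ≤ x ⬝ᵥ M *ᵥ y := by
  rw [Finset.sum_mul_sum, Finset.mul_sum]
  simp only [dotProduct, mulVec, Finset.mul_sum]
  refine Finset.sum_le_sum fun a _ => Finset.sum_le_sum fun b _ => ?_
  nlinarith [mul_le_mul_of_nonneg_left (hc a b) (mul_nonneg (hx a) (hy b))]

/-- If every entry of `Gᵀ A H` is nonnegative, then the optimal value of `SV(A,P,Q)` is the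
minimum entry of `Gᵀ A H`, attained at a pair of generator columns of `G` and `H`. -/
theorem stmt3 {m n p q : ℕ} (hp : 0 < p) (hq : 0 < q)
    (A : Matrix (Fin m) (Fin n) ℝ)
    (G : Matrix (Fin m) (Fin p) ℝ) (H : Matrix (Fin n) (Fin q) ℝ)
    (hG : ∀ j, vnorm (fun i => G i j) = 1) (hH : ∀ j, vnorm (fun i => H i j) = 1)
    (hpos : ∀ i j, 0 ≤ (Gᵀ * A * H) i j) :
    ∃ (i : Fin p) (j : Fin q),
      (∀ i' j', (Gᵀ * A * H) i j ≤ (Gᵀ * A * H) i' j') ∧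
      (fun k => G k i) ⬝ᵥ A.mulVec (fun k => H k j) = (Gᵀ * A * H) i j ∧
      IsOptSV A (coneOf G) (coneOf H) (fun k => G k i) (fun k => H k j) := by
  have : Nonempty (Fin p × Fin q) := ⟨(⟨0, hp⟩, ⟨0, hq⟩)⟩
  obtain ⟨⟨i, j⟩, hmin⟩ := Finite.exists_min fun ij : Fin p × Fin q => (Gᵀ * A * H) ij.1 ij.2
  have hmin' : ∀ i' j', (Gᵀ * A * H) i j ≤ (Gᵀ * A * H) i' j' := fun i' j' => hmin (i', j')
  refine ⟨i, j, hmin', col_dotProduct_mulVec_col A G H i j, col_mem_coneOf G i, hG i,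
    col_mem_coneOf H j, hH j, ?_⟩
  rintro _ ⟨x, hx, rfl⟩ _ ⟨y, hy, rfl⟩ hnx hny
  have hsx : 1 ≤ ∑ a, x a := hnx ▸ vnorm_mulVec_le_sum_of_nonneg hG hx
  have hsy : 1 ≤ ∑ b, y b := hny ▸ vnorm_mulVec_le_sum_of_nonneg hH hy
  rw [mulVec_dotProduct_mulVec_mulVec]
  refine (col_dotProduct_mulVec_col A G H i j).trans_le ?_
  calc (Gᵀ * A * H) i j ≤ (Gᵀ * A * H) i j * ((∑ a, x a) * ∑ b, y b) :=
        le_mul_of_one_le_right (hpos i j) (one_le_mul_of_one_le_of_one_le hsx hsy)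
    _ ≤ x ⬝ᵥ (Gᵀ * A * H) *ᵥ y := mul_sum_mul_sum_le_dotProduct_mulVec hmin' hx hy
end

section
/- Let A ∈ ℝ^{m×n}, let Ḡ ∈ ℝ^{m×k} and H̄ ∈ ℝ^{n×ℓ} be full-column-rank matrices, set A_x = H̄⁺AᵀḠ, A_y = Ḡ⁺AH̄, and M = [[0, A_x],[A_y, 0]]. Then all eigenvalues of M are real and λ := −√(ρ(A_y A_x)) is the least eigenvalue of M. -/
/-!
Factor `ḠᵀḠ = RᵀR` and `H̄ᵀH̄ = TᵀT` with `R`, `T` invertible. Then `A_y = R⁻¹ B T` and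
`A_x = T⁻¹ Bᵀ R` for `B = (ḠR⁻¹)ᵀ A (H̄T⁻¹)`, so `M` is similar to the symmetric matrix
`N = [[0, Bᵀ], [B, 0]]` and `A_y A_x` is similar to `BBᵀ`. Hence the spectrum of `M` is real;
it is symmetric about `0` because `N` anticommutes with `diag(1, -1)`; and `N² = diag(BᵀB, BBᵀ)`,
whose eigenvalues are nonnegative and at most `ρ(BBᵀ)`, since the nonzero eigenvalues of `BᵀB`
are those of `BBᵀ`. So every eigenvalue `t` of `M` has `t² ≤ ρ(BBᵀ)`, and `±√ρ(BBᵀ)` are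
eigenvalues.
-/

open Matrix

/-- Pseudoinverse of a full-column-rank matrix: `N⁺ = (NᵀN)⁻¹Nᵀ`. -/
noncomputable def pinv {α β : Type*} [Fintype α] [Fintype β] [DecidableEq β]
    (N : Matrix α β ℝ) : Matrix β α ℝ :=
  (Nᵀ * N)⁻¹ * Nᵀ

/-- Spectral radius of a real square matrix: the largest modulus of its (complex)
eigenvalues. -/
noncomputable def specRad {α : Type*} [Fintype α] [DecidableEq α]
    (C : Matrix α α ℝ) : ℝ :=
  sSup {r : ℝ | ∃ μ : ℂ, μ ∈ spectrum ℂ (C.map Complex.ofReal) ∧ r = ‖μ‖}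

open scoped ComplexOrder MatrixOrder

theorem SemiconjBy.spectrum_eq {R A : Type*} [CommSemiring R] [Ring A] [Algebra R A]
    {u a b : A} (h : SemiconjBy u a b) (hu : IsUnit u) : spectrum R a = spectrum R b := by
  obtain ⟨u, rfl⟩ := hu
  rw [← spectrum.units_conjugate (u := u) (a := a), h.eq, Units.mul_inv_cancel_right]

namespace Matrix

section CommRing

variable {R : Type*} [CommRing R] {p q : Type*} [Fintype p] [Fintype q] [DecidableEq p]
  [DecidableEq q]

theorem spectrum_fromBlocks_zero₁₂_zero₂₁ (C : Matrix p p R) (D : Matrix q q R) :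
    spectrum R (fromBlocks C 0 0 D) = spectrum R C ∪ spectrum R D := by
  ext μ
  have h : algebraMap R _ μ - fromBlocks C 0 0 D =
      fromBlocks (algebraMap R _ μ - C) 0 0 (algebraMap R _ μ - D) := by
    simp [Algebra.algebraMap_eq_smul_one, ← fromBlocks_one, fromBlocks_smul, sub_eq_add_neg,
      fromBlocks_neg, fromBlocks_add]
  simp only [spectrum.mem_iff, Set.mem_union, h, isUnit_iff_isUnit_det, det_fromBlocks_zero₂₁,
    IsUnit.mul_iff, not_and_or]

theorem semiconjBy_fromBlocks_zero {T : Matrix q q R} {S : Matrix p p R} (hT : IsUnit T.det)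
    (hS : IsUnit S.det) (X : Matrix q p R) (Y : Matrix p q R) :
    SemiconjBy (fromBlocks T 0 0 S) (fromBlocks 0 (T⁻¹ * X * S) (S⁻¹ * Y * T) 0)
      (fromBlocks 0 X Y 0) := by
  simp [SemiconjBy, fromBlocks_multiply, ← Matrix.mul_assoc, mul_nonsing_inv _ hT,
    mul_nonsing_inv _ hS]

theorem neg_mem_spectrum_fromBlocks_zero (X : Matrix q p R) (Y : Matrix p q R) {μ : R}
    (h : μ ∈ spectrum R (fromBlocks 0 X Y 0)) : -μ ∈ spectrum R (fromBlocks 0 X Y 0) := by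
  set J : Matrix (q ⊕ p) (q ⊕ p) R := fromBlocks 1 0 0 (-1)
  have hJ : SemiconjBy J (fromBlocks 0 X Y 0) (-fromBlocks 0 X Y 0) := by
    simp [J, SemiconjBy, fromBlocks_multiply, fromBlocks_neg]
  have hJunit : IsUnit J := IsUnit.of_mul_eq_one (b := J) (by simp [J, fromBlocks_multiply])
  rw [hJ.spectrum_eq hJunit, ← spectrum.neg_eq] at h
  simpa using h

end CommRing

section Field

variable {K : Type*} [Field K] {p q : Type*} [Fintype q]

theorem mulVec_injective_of_rank_eq {N : Matrix p q K} (h : N.rank = Fintype.card q) :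
    Function.Injective N.mulVec :=
  mulVec_injective_iff.2 <| linearIndependent_iff_card_eq_finrank_span.2 <|
    h ▸ N.rank_eq_finrank_span_cols

variable [Fintype p] [DecidableEq p] [DecidableEq q]

theorem mem_spectrum_mul_comm {X : Matrix p q K} {Y : Matrix q p K} {μ : K} (hμ : μ ≠ 0) :
    μ ∈ spectrum K (X * Y) ↔ μ ∈ spectrum K (Y * X) := by
  have hXY : algebraMap K (Matrix p p K) μ - X * Y = μ • (1 - (μ⁻¹ • X) * Y) := by
    rw [Matrix.smul_mul, smul_sub, smul_smul, mul_inv_cancel₀ hμ, one_smul,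
      Algebra.algebraMap_eq_smul_one]
  have hYX : algebraMap K (Matrix q q K) μ - Y * X = μ • (1 - Y * (μ⁻¹ • X)) := by
    rw [Matrix.mul_smul, smul_sub, smul_smul, mul_inv_cancel₀ hμ, one_smul,
      Algebra.algebraMap_eq_smul_one]
  rw [spectrum.mem_iff, spectrum.mem_iff, hXY, hYX, isUnit_iff_isUnit_det, isUnit_iff_isUnit_det,
    det_smul, det_smul, det_one_sub_mul_comm]
  simp [hμ]

end Field

section Complexification

variable {m n : Type*}

theorem map_ofReal_transpose (B : Matrix m n ℝ) :
    Bᵀ.map Complex.ofReal = (B.map Complex.ofReal)ᴴ := by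
  ext; simp

theorem map_ofReal_fromBlocks_zero_transpose (B : Matrix m n ℝ) :
    (fromBlocks 0 Bᵀ B 0).map Complex.ofReal =
      fromBlocks 0 (B.map Complex.ofReal)ᴴ (B.map Complex.ofReal) 0 := by
  simp only [fromBlocks_map, Matrix.map_zero _ Complex.ofReal_zero, map_ofReal_transpose]

theorem map_ofReal_mul_transpose [Fintype n] (B : Matrix m n ℝ) :
    (B * Bᵀ).map Complex.ofReal = B.map Complex.ofReal * (B.map Complex.ofReal)ᴴ := by
  rw [← map_ofReal_transpose]
  exact Matrix.map_mul (f := Complex.ofRealHom)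

theorem isHermitian_fromBlocks_zero_conjTranspose (Z : Matrix m n ℂ) :
    (fromBlocks 0 Zᴴ Z 0).IsHermitian :=
  .fromBlocks (by simp) (conjTranspose_conjTranspose Z) (by simp)

variable [Fintype m] [Fintype n] [DecidableEq n]

theorem exists_isUnit_transpose_mul_self_eq {N : Matrix m n ℝ} (h : N.rank = Fintype.card n) :
    ∃ R : Matrix n n ℝ, IsUnit R ∧ Nᵀ * N = Rᵀ * R := by
  simpa only [star_eq_conjTranspose, conjTranspose_eq_transpose_of_trivial] using
    CStarAlgebra.isStrictlyPositive_iff_eq_star_mul_self.mp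
      (PosDef.conjTranspose_mul_self N (mulVec_injective_of_rank_eq h)).isStrictlyPositive

theorem _root_.SemiconjBy.spectrum_map_ofReal_eq {U X Y : Matrix n n ℝ} (h : SemiconjBy U X Y)
    (hU : IsUnit U) :
    spectrum ℂ (X.map Complex.ofReal) = spectrum ℂ (Y.map Complex.ofReal) :=
  (h.map Complex.ofRealHom.mapMatrix).spectrum_eq (hU.map _)

theorem IsHermitian.spectrum_subset_range_ofReal {A : Matrix n n ℂ} (hA : A.IsHermitian) :
    spectrum ℂ A ⊆ Set.range Complex.ofReal :=
  hA.spectrum_eq_image_range ▸ Set.image_subset_range _ _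

end Complexification

end Matrix

section SpectralRadius

variable {n : Type*} [Fintype n] [DecidableEq n]

theorem exists_pinv_eq_inv_mul_transpose {m : Type*} [Fintype m] {N : Matrix m n ℝ}
    (h : N.rank = Fintype.card n) :
    ∃ R : Matrix n n ℝ, IsUnit R.det ∧ pinv N = R⁻¹ * (N * R⁻¹)ᵀ := by
  obtain ⟨R, hR, hNR⟩ := exists_isUnit_transpose_mul_self_eq h
  refine ⟨R, (isUnit_iff_isUnit_det R).1 hR, ?_⟩
  rw [pinv, hNR, Matrix.mul_inv_rev, transpose_mul, transpose_nonsing_inv, Matrix.mul_assoc]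

theorem specRad_eq_of_semiconjBy {U X Y : Matrix n n ℝ} (h : SemiconjBy U X Y) (hU : IsUnit U) :
    specRad X = specRad Y := by
  simp only [specRad, h.spectrum_map_ofReal_eq hU]

-- In `ComplexOrder`, `μ ≤ specRad C` also forces the eigenvalue `μ` to be real.
theorem isGreatest_spectrum_specRad [Nonempty n] {C : Matrix n n ℝ}
    (hC : (C.map Complex.ofReal).PosSemidef) :
    IsGreatest (spectrum ℂ (C.map Complex.ofReal)) (specRad C) := by
  set ev := hC.isHermitian.eigenvalues
  have hσ : spectrum ℂ (C.map Complex.ofReal) = Complex.ofReal '' Set.range ev :=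
    hC.isHermitian.spectrum_eq_image_range
  obtain ⟨i, hi⟩ := Finite.exists_max ev
  have hmem : (ev i : ℂ) ∈ spectrum ℂ (C.map Complex.ofReal) := hσ ▸ ⟨_, ⟨i, rfl⟩, rfl⟩
  have hρ : specRad C = ev i := by
    refine IsGreatest.csSup_eq ⟨⟨_, hmem, ?_⟩, ?_⟩
    · rw [Complex.norm_real, Real.norm_of_nonneg (hC.eigenvalues_nonneg i)]
    · rintro _ ⟨μ, hμ, rfl⟩
      obtain ⟨_, ⟨j, rfl⟩, rfl⟩ := hσ ▸ hμ
      rw [Complex.norm_real, Real.norm_of_nonneg (hC.eigenvalues_nonneg j)]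
      exact hi j
  refine hρ ▸ ⟨hmem, ?_⟩
  rintro μ hμ
  obtain ⟨_, ⟨j, rfl⟩, rfl⟩ := hσ ▸ hμ
  exact_mod_cast hi j

end SpectralRadius

theorem isLeast_spectrum_fromBlocks_zero_conjTranspose {p q : Type*} [Fintype p] [Fintype q]
    [DecidableEq p] [DecidableEq q] {Z : Matrix p q ℂ} {r : ℝ}
    (hr : IsGreatest (spectrum ℂ (Z * Zᴴ)) r) :
    IsLeast {t : ℝ | (t : ℂ) ∈ spectrum ℂ (fromBlocks 0 Zᴴ Z 0)} (-√r) := by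
  set N := fromBlocks 0 Zᴴ Z 0
  have hN := isHermitian_fromBlocks_zero_conjTranspose Z
  have hsq : (· ^ 2) '' spectrum ℂ N = spectrum ℂ (Zᴴ * Z) ∪ spectrum ℂ (Z * Zᴴ) := by
    rw [← spectrum.map_pow_of_pos N two_pos, sq, fromBlocks_multiply]
    simpa using spectrum_fromBlocks_zero₁₂_zero₂₁ (Zᴴ * Z) (Z * Zᴴ)
  have hr0 : (0 : ℂ) ≤ r :=
    (posSemidef_iff_isHermitian_and_spectrum_nonneg.1 (posSemidef_self_mul_conjTranspose Z)).2 hr.1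
  have hle : ∀ μ ∈ spectrum ℂ (Zᴴ * Z) ∪ spectrum ℂ (Z * Zᴴ), μ ≤ r := by
    rintro μ (hμ | hμ)
    · rcases eq_or_ne μ 0 with rfl | hμ0
      · exact hr0
      · exact hr.2 ((mem_spectrum_mul_comm hμ0).1 hμ)
    · exact hr.2 hμ
  constructor
  · obtain ⟨_, hs, hsr⟩ : (r : ℂ) ∈ (· ^ 2) '' spectrum ℂ N := hsq ▸ Or.inr hr.1
    obtain ⟨s, rfl⟩ := hN.spectrum_subset_range_ofReal hs
    have hrs : √r = |s| := by
      have hsr : (s : ℂ) ^ 2 = r := hsr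
      rw [← Real.sqrt_sq_eq_abs]
      congr 1
      exact_mod_cast hsr.symm
    rcases abs_choice s with h | h
    · simpa [hrs, h] using neg_mem_spectrum_fromBlocks_zero Zᴴ Z hs
    · simpa [hrs, h] using hs
  · intro t ht
    have ht2 : (t : ℂ) ^ 2 ∈ spectrum ℂ (Zᴴ * Z) ∪ spectrum ℂ (Z * Zᴴ) :=
      hsq ▸ Set.mem_image_of_mem (· ^ 2) ht
    replace ht2 : t ^ 2 ≤ r := by exact_mod_cast hle _ ht2
    linarith [neg_abs_le t, Real.abs_le_sqrt ht2]

theorem stmt12_general {m n k l : ℕ} (hk : 0 < k)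
    (A : Matrix (Fin m) (Fin n) ℝ)
    (Gb : Matrix (Fin m) (Fin k) ℝ) (Hb : Matrix (Fin n) (Fin l) ℝ)
    (hGrank : Gb.rank = k) (hHrank : Hb.rank = l) :
    (∀ μ ∈ spectrum ℂ
        ((Matrix.fromBlocks 0 (pinv Hb * Aᵀ * Gb) (pinv Gb * A * Hb) 0).map Complex.ofReal),
      μ.im = 0) ∧
    IsLeast {t : ℝ | (t : ℂ) ∈ spectrum ℂ
        ((Matrix.fromBlocks 0 (pinv Hb * Aᵀ * Gb) (pinv Gb * A * Hb) 0).map Complex.ofReal)}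
      (-Real.sqrt (specRad (pinv Gb * A * Hb * (pinv Hb * Aᵀ * Gb)))) := by
  have : Nonempty (Fin k) := ⟨⟨0, hk⟩⟩
  obtain ⟨R, hR, hGR⟩ := exists_pinv_eq_inv_mul_transpose (N := Gb) (by simpa using hGrank)
  obtain ⟨T, hT, hHT⟩ := exists_pinv_eq_inv_mul_transpose (N := Hb) (by simpa using hHrank)
  set B := (Gb * R⁻¹)ᵀ * A * (Hb * T⁻¹)
  have hAy : pinv Gb * A * Hb = R⁻¹ * B * T := by
    simp [B, hGR, Matrix.mul_assoc, nonsing_inv_mul _ hT]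
  have hAx : pinv Hb * Aᵀ * Gb = T⁻¹ * Bᵀ * R := by
    simp [B, hHT, transpose_mul, Matrix.mul_assoc, nonsing_inv_mul _ hR]
  have hD : IsUnit (fromBlocks T 0 0 R) := by
    rw [isUnit_iff_isUnit_det, det_fromBlocks_zero₂₁]
    exact hT.mul hR
  have hM := (semiconjBy_fromBlocks_zero hT hR Bᵀ B).spectrum_map_ofReal_eq hD
  have hρ : specRad (R⁻¹ * B * T * (T⁻¹ * Bᵀ * R)) = specRad (B * Bᵀ) := by
    refine specRad_eq_of_semiconjBy (U := R) ?_ ((isUnit_iff_isUnit_det R).2 hR)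
    simp [SemiconjBy, Matrix.mul_assoc, mul_nonsing_inv_cancel_left _ _ hR,
      mul_nonsing_inv_cancel_left _ _ hT]
  have hBBt := map_ofReal_mul_transpose B
  rw [hAx, hAy, hM, hρ, map_ofReal_fromBlocks_zero_transpose]
  refine ⟨fun μ hμ => ?_, isLeast_spectrum_fromBlocks_zero_conjTranspose
    (hBBt ▸ isGreatest_spectrum_specRad (hBBt ▸ posSemidef_self_mul_conjTranspose _))⟩
  obtain ⟨x, rfl⟩ := (isHermitian_fromBlocks_zero_conjTranspose _).spectrum_subset_range_ofReal hμ
  exact Complex.ofReal_im x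

/-- With `A_x = H̄⁺AᵀḠ`, `A_y = Ḡ⁺AH̄` for full-column-rank `Ḡ`, `H̄`, and
`M = [[0, A_x],[A_y, 0]]`, all eigenvalues of `M` are real and
`λ = −√(ρ(A_y A_x))` is the least eigenvalue of `M`. -/
theorem stmt12 {m n k l : ℕ} (hk : 0 < k) (hl : 0 < l)
    (A : Matrix (Fin m) (Fin n) ℝ)
    (Gb : Matrix (Fin m) (Fin k) ℝ) (Hb : Matrix (Fin n) (Fin l) ℝ)
    (hGrank : Gb.rank = k) (hHrank : Hb.rank = l) :
    (∀ μ ∈ spectrum ℂ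
        ((Matrix.fromBlocks 0 (pinv Hb * Aᵀ * Gb) (pinv Gb * A * Hb) 0).map Complex.ofReal),
      μ.im = 0) ∧
    IsLeast {t : ℝ | (t : ℂ) ∈ spectrum ℂ
        ((Matrix.fromBlocks 0 (pinv Hb * Aᵀ * Gb) (pinv Gb * A * Hb) 0).map Complex.ofReal)}
      (-Real.sqrt (specRad (pinv Gb * A * Hb * (pinv Hb * Aᵀ * Gb)))) :=
  stmt12_general hk A Gb Hb hGrank hHrank
end

section
/- Let n ≥ 2 and let 𝓗 ⊆ ℝ^n be the Schur cone. Then min{⟨x,y⟩ : x ∈ 𝓗, ‖x‖ = 1, y ∈ ℝ^n, y ≥ 0, ‖y‖ = 1} = −√(1 − 1/n), and the unique minimizing pair is y = e_n and x = √(n/(n−1)) · (e/n − e_n), where e is the all-ones vector and e_n the n-th canonical basis vector. -/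
open Matrix

/-- The Schur cone in `ℝ^n`: the convex cone generated by the vectors `e_i - e_{i+1}`,
`i = 1, …, n-1` (here written with 0-based indices). -/
def schurCone (n : ℕ) : Set (Fin n → ℝ) :=
  {x | ∃ c : Fin (n - 1) → ℝ, (∀ i, 0 ≤ c i) ∧
    x = ∑ i, c i • (fun j : Fin n =>
      if (j : ℕ) = (i : ℕ) then (1 : ℝ) else if (j : ℕ) = (i : ℕ) + 1 then -1 else 0)}

/-!
Write `x = x⁺ - x⁻` and `P = ∑ x⁺`. For `y ≥ 0` with `‖y‖ = 1`, Cauchy–Schwarz gives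
`⟨x, y⟩ ≥ ⟨x⁺, y⟩ - ‖x⁻‖ ≥ -‖x⁻‖`. A vector of the Schur cone has coordinate sum `0` (so also
`∑ x⁻ = P`) and last coordinate `x_n ≤ 0`, and for such `x`
`(n-1)‖x‖² - n‖x⁻‖² = (n-1) ∑_{j≠n} (x⁺_j - P/(n-1))² + ∑_j x⁻_j (P - x⁻_j)`,
where both sums are nonnegative because `x⁻_j ≤ ∑ x⁻ = P`. Hence `‖x⁻‖² ≤ 1 - 1/n` when `‖x‖ = 1`.
At equality both sums vanish: `x` is constant off the last coordinate, hence a positive multiple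
of `e/n - e_n`, and `⟨x⁺, y⟩ = 0` forces `y` to be supported on the last coordinate.
-/

open Finset

lemma Real.posPart_mul_negPart (a : ℝ) : a⁺ * a⁻ = 0 := by
  rcases le_total 0 a with h | h
  · rw [negPart_eq_zero.2 h, mul_zero]
  · rw [posPart_eq_zero.2 h, zero_mul]

lemma Real.sq_eq_posPart_sq_add_negPart_sq (a : ℝ) : a ^ 2 = a⁺ ^ 2 + a⁻ ^ 2 := by
  conv_lhs => rw [← posPart_sub_negPart a]
  linear_combination (-2) * Real.posPart_mul_negPart a

lemma card_mul_sum_sub_mean_sq {ι : Type*} (s : Finset ι) (f : ι → ℝ) :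
    #s * ∑ i ∈ s, (f i - (∑ j ∈ s, f j) / #s) ^ 2 =
      #s * ∑ i ∈ s, f i ^ 2 - (∑ i ∈ s, f i) ^ 2 := by
  rcases s.eq_empty_or_nonempty with rfl | hs
  · simp
  have hcard : (#s : ℝ) ≠ 0 := by exact_mod_cast hs.card_pos.ne'
  simp only [sub_sq, sum_add_distrib, sum_sub_distrib, ← sum_mul, ← mul_sum, sum_const,
    nsmul_eq_mul]
  field_simp
  ring

section SumZero

variable {ι : Type*} [Fintype ι] {x y : ι → ℝ}

lemma sum_negPart_eq_sum_posPart (hx : ∑ j, x j = 0) : ∑ j, (x j)⁻ = ∑ j, (x j)⁺ := by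
  have h : ∑ j, ((x j)⁺ - (x j)⁻) = 0 := by simpa only [posPart_sub_negPart] using hx
  rw [sum_sub_distrib, sub_eq_zero] at h
  exact h.symm

lemma negPart_mul_sum_posPart_sub_nonneg (hx : ∑ j, x j = 0) (j : ι) :
    0 ≤ (x j)⁻ * (∑ i, (x i)⁺ - (x j)⁻) := by
  refine mul_nonneg (negPart_nonneg _) (sub_nonneg.2 ?_)
  rw [← sum_negPart_eq_sum_posPart hx]
  exact single_le_sum (fun i _ => negPart_nonneg (x i)) (mem_univ j)

lemma sum_posPart_mul_le (hy : ∑ j, y j ^ 2 = 1) :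
    ∑ j, (x j)⁺ * y j ≤ ∑ j, x j * y j + √(∑ j, (x j)⁻ ^ 2) := by
  have hsplit : ∑ j, x j * y j = ∑ j, (x j)⁺ * y j - ∑ j, (x j)⁻ * y j := by
    simp only [← sum_sub_distrib, ← sub_mul, posPart_sub_negPart]
  have hcs := Real.sum_mul_le_sqrt_mul_sqrt univ (fun j => (x j)⁻) y
  rw [hy, Real.sqrt_one, mul_one] at hcs
  linarith

variable [DecidableEq ι] {k : ι}

lemma card_sub_one_mul_sum_sq_sub_card_mul_sum_negPart_sq (hx : ∑ j, x j = 0) (hk : x k ≤ 0) :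
    (Fintype.card ι - 1) * ∑ j, x j ^ 2 - Fintype.card ι * ∑ j, (x j)⁻ ^ 2 =
      (Fintype.card ι - 1) *
          ∑ j ∈ univ.erase k, ((x j)⁺ - (∑ i, (x i)⁺) / (Fintype.card ι - 1)) ^ 2 +
        ∑ j, (x j)⁻ * (∑ i, (x i)⁺ - (x j)⁻) := by
  have hcard : (#(univ.erase k) : ℝ) = Fintype.card ι - 1 := by
    rw [card_erase_of_mem (mem_univ k), card_univ, Nat.cast_sub (Fintype.card_pos_iff.2 ⟨k⟩)]
    simp
  have hk0 : (x k)⁺ = 0 := posPart_eq_zero.2 hk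
  have hP : ∑ j ∈ univ.erase k, (x j)⁺ = ∑ j, (x j)⁺ := by
    rw [← sum_erase_add _ _ (mem_univ k), hk0, add_zero]
  have hP2 : ∑ j ∈ univ.erase k, (x j)⁺ ^ 2 = ∑ j, (x j)⁺ ^ 2 := by
    rw [← sum_erase_add _ _ (mem_univ k), hk0]
    simp
  have hvar := card_mul_sum_sub_mean_sq (univ.erase k) (fun j => (x j)⁺)
  rw [hcard, hP, hP2] at hvar
  have hneg : ∑ j, (x j)⁻ * (∑ i, (x i)⁺ - (x j)⁻) = (∑ i, (x i)⁺) ^ 2 - ∑ j, (x j)⁻ ^ 2 := by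
    simp only [mul_sub, sum_sub_distrib, ← sum_mul, sum_negPart_eq_sum_posPart hx, sq]
  have hsq : ∑ j, x j ^ 2 = ∑ j, (x j)⁺ ^ 2 + ∑ j, (x j)⁻ ^ 2 := by
    rw [← sum_add_distrib]
    exact sum_congr rfl fun j _ => Real.sq_eq_posPart_sq_add_negPart_sq (x j)
  rw [hvar, hneg, hsq]
  ring

lemma card_mul_sum_negPart_sq_le (hx : ∑ j, x j = 0) (hk : x k ≤ 0) :
    Fintype.card ι * ∑ j, (x j)⁻ ^ 2 ≤ (Fintype.card ι - 1) * ∑ j, x j ^ 2 := by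
  have hcard : (1 : ℝ) ≤ Fintype.card ι := by exact_mod_cast Fintype.card_pos_iff.2 ⟨k⟩
  have hvar : (0 : ℝ) ≤ (Fintype.card ι - 1) *
      ∑ j ∈ univ.erase k, ((x j)⁺ - (∑ i, (x i)⁺) / (Fintype.card ι - 1)) ^ 2 :=
    mul_nonneg (sub_nonneg.2 hcard) (sum_nonneg fun _ _ => sq_nonneg _)
  have hneg := sum_nonneg fun j (_ : j ∈ univ) => negPart_mul_sum_posPart_sub_nonneg hx j
  linarith [card_sub_one_mul_sum_sq_sub_card_mul_sum_negPart_sq hx hk]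

lemma apply_eq_of_card_mul_sum_negPart_sq_eq (hx : ∑ j, x j = 0) (hk : x k ≤ 0)
    (heq : Fintype.card ι * ∑ j, (x j)⁻ ^ 2 = (Fintype.card ι - 1) * ∑ j, x j ^ 2)
    {j : ι} (hj : j ≠ k) : x j = (∑ i, (x i)⁺) / (Fintype.card ι - 1) := by
  set P := ∑ i, (x i)⁺
  have hcard : (0 : ℝ) < Fintype.card ι - 1 := by
    have : 1 < Fintype.card ι := Fintype.one_lt_card_iff.2 ⟨j, k, hj⟩
    rw [sub_pos]
    exact_mod_cast this
  have hvar : 0 ≤ ∑ j ∈ univ.erase k, ((x j)⁺ - P / (Fintype.card ι - 1)) ^ 2 :=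
    sum_nonneg fun _ _ => sq_nonneg _
  have hneg := sum_nonneg fun j (_ : j ∈ univ) => negPart_mul_sum_posPart_sub_nonneg hx j
  have hsum := card_sub_one_mul_sum_sq_sub_card_mul_sum_negPart_sq hx hk
  rw [heq, sub_self] at hsum
  have hvar0 : ∑ j ∈ univ.erase k, ((x j)⁺ - P / (Fintype.card ι - 1)) ^ 2 = 0 := by
    nlinarith [mul_nonneg hcard.le hvar]
  have hpos : (x j)⁺ = P / (Fintype.card ι - 1) := by
    have := (sum_eq_zero_iff_of_nonneg fun _ _ => sq_nonneg _).1 hvar0 j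
      (mem_erase.2 ⟨hj, mem_univ j⟩)
    exact sub_eq_zero.1 (pow_eq_zero_iff two_ne_zero |>.1 this)
  have hnegj : (x j)⁻ * (P - (x j)⁻) = 0 :=
    (sum_eq_zero_iff_of_nonneg fun j _ => negPart_mul_sum_posPart_sub_nonneg hx j).1
      (by nlinarith [mul_nonneg hcard.le hvar]) j (mem_univ j)
  have hprod := Real.posPart_mul_negPart (x j)
  rw [hpos] at hprod
  have hP : P = (Fintype.card ι - 1) * (P / (Fintype.card ι - 1)) := by field_simp
  rw [hP] at hnegj
  have hnegj0 : (x j)⁻ = 0 := by nlinarith [negPart_nonneg (x j)]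
  rw [← posPart_sub_negPart (x j), hpos, hnegj0, sub_zero]

variable (k) in
noncomputable def centeredNegSingle : ι → ℝ := (Fintype.card ι : ℝ)⁻¹ • (fun _ => 1) - Pi.single k 1

lemma centeredNegSingle_apply (j : ι) :
    centeredNegSingle k j = (Fintype.card ι : ℝ)⁻¹ - if j = k then 1 else 0 := by
  simp [centeredNegSingle, Pi.single_apply]

lemma eq_smul_centeredNegSingle {c : ℝ} (hx : ∑ j, x j = 0) (hc : ∀ j ≠ k, x j = c) :
    x = (Fintype.card ι * c) • centeredNegSingle k := by
  have hcard : (Fintype.card ι : ℝ) ≠ 0 := by exact_mod_cast (Fintype.card_pos_iff.2 ⟨k⟩).ne'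
  have hxk : x k = c - Fintype.card ι * c := by
    have h := sum_erase_add _ x (mem_univ k)
    rw [sum_congr rfl fun j hj => hc j (ne_of_mem_erase hj), sum_const, card_erase_of_mem
      (mem_univ k), card_univ, nsmul_eq_mul, Nat.cast_sub (Fintype.card_pos_iff.2 ⟨k⟩), hx] at h
    push_cast at h
    linarith
  funext j
  rw [Pi.smul_apply, centeredNegSingle_apply, smul_eq_mul]
  split_ifs with hj
  · subst hj
    rw [hxk]
    field_simp
  · rw [hc j hj]
    field_simp
    ring

lemma sum_sq_smul_centeredNegSingle (c : ℝ) :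
    ∑ j, ((c • centeredNegSingle k) j) ^ 2 = c ^ 2 * (1 - 1 / Fintype.card ι) := by
  have hcard : (Fintype.card ι : ℝ) ≠ 0 := by exact_mod_cast (Fintype.card_pos_iff.2 ⟨k⟩).ne'
  have hsq : ∀ j, ((c • centeredNegSingle k) j) ^ 2 = c ^ 2 *
      ((Fintype.card ι : ℝ)⁻¹ ^ 2 + if j = k then 1 - 2 * (Fintype.card ι : ℝ)⁻¹ else 0) := by
    intro j
    rw [Pi.smul_apply, centeredNegSingle_apply, smul_eq_mul]
    split_ifs <;> ring
  simp only [hsq, ← mul_sum, sum_add_distrib, sum_const, card_univ, nsmul_eq_mul, sum_ite_eq',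
    mem_univ, if_true]
  field_simp
  ring

lemma eq_sqrt_of_sum_sq_smul_centeredNegSingle_eq_one {c : ℝ} (hc : 0 ≤ c)
    (h : ∑ j, ((c • centeredNegSingle k) j) ^ 2 = 1) :
    c = √(Fintype.card ι / (Fintype.card ι - 1)) := by
  have hcard : (0 : ℝ) < Fintype.card ι := by exact_mod_cast Fintype.card_pos_iff.2 ⟨k⟩
  rw [sum_sq_smul_centeredNegSingle, one_sub_div hcard.ne'] at h
  have hcard1 : (0 : ℝ) < Fintype.card ι - 1 := by
    refine lt_of_le_of_ne (sub_nonneg.2 (by exact_mod_cast hcard)) fun h' => ?_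
    rw [← h'] at h
    simp at h
  rw [eq_comm, Real.sqrt_eq_iff_mul_self_eq (by positivity) hc]
  field_simp at h ⊢
  linarith

lemma sum_negPart_sq_le (hx : ∑ j, x j = 0) (hk : x k ≤ 0) (hx1 : ∑ j, x j ^ 2 = 1) :
    ∑ j, (x j)⁻ ^ 2 ≤ 1 - 1 / Fintype.card ι := by
  have hcard : (0 : ℝ) < Fintype.card ι := by exact_mod_cast Fintype.card_pos_iff.2 ⟨k⟩
  have h := card_mul_sum_negPart_sq_le hx hk
  rw [hx1, mul_one] at h
  rw [one_sub_div hcard.ne', le_div_iff₀ hcard]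
  linarith

theorem neg_sqrt_le_sum_mul (hx : ∑ j, x j = 0) (hk : x k ≤ 0) (hx1 : ∑ j, x j ^ 2 = 1)
    (hy : ∀ j, 0 ≤ y j) (hy1 : ∑ j, y j ^ 2 = 1) :
    -√(1 - 1 / Fintype.card ι) ≤ ∑ j, x j * y j := by
  have hpos : 0 ≤ ∑ j, (x j)⁺ * y j := sum_nonneg fun j _ => mul_nonneg (posPart_nonneg _) (hy j)
  have := Real.sqrt_le_sqrt (sum_negPart_sq_le hx hk hx1)
  linarith [sum_posPart_mul_le (x := x) hy1]

lemma eq_single_of_sum_mul_eq_zero {a : ι → ℝ} (ha : ∀ j, 0 ≤ a j) (hak : ∀ j ≠ k, 0 < a j)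
    (hy : ∀ j, 0 ≤ y j) (hy1 : ∑ j, y j ^ 2 = 1) (h : ∑ j, a j * y j = 0) :
    y = Pi.single k 1 := by
  have hzero : ∀ j ≠ k, y j = 0 := fun j hj =>
    (mul_eq_zero.1 ((sum_eq_zero_iff_of_nonneg fun i _ => mul_nonneg (ha i) (hy i)).1 h j
      (mem_univ j))).resolve_left (hak j hj).ne'
  have hyk : y k ^ 2 = 1 := by
    rwa [Fintype.sum_eq_single k fun j hj => by rw [hzero j hj]; ring] at hy1
  funext j
  rw [Pi.single_apply]
  split_ifs with hj
  · subst hj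
    nlinarith [hy j]
  · exact hzero j hj

theorem eq_of_sum_mul_eq_neg_sqrt (hx : ∑ j, x j = 0) (hk : x k ≤ 0) (hx1 : ∑ j, x j ^ 2 = 1)
    (hy : ∀ j, 0 ≤ y j) (hy1 : ∑ j, y j ^ 2 = 1)
    (heq : ∑ j, x j * y j = -√(1 - 1 / Fintype.card ι)) :
    x = √(Fintype.card ι / (Fintype.card ι - 1)) • centeredNegSingle k ∧ y = Pi.single k 1 := by
  have hcard : (0 : ℝ) < Fintype.card ι := by exact_mod_cast Fintype.card_pos_iff.2 ⟨k⟩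
  have hle := sum_negPart_sq_le hx hk hx1
  have hpos : 0 ≤ ∑ j, (x j)⁺ * y j := sum_nonneg fun j _ => mul_nonneg (posPart_nonneg _) (hy j)
  have hcs := sum_posPart_mul_le (x := x) hy1
  have hsqrt := Real.sqrt_le_sqrt hle
  have hay : ∑ j, (x j)⁺ * y j = 0 := by linarith
  have hb : ∑ j, (x j)⁻ ^ 2 = 1 - 1 / Fintype.card ι :=
    le_antisymm hle ((Real.sqrt_le_sqrt_iff (sum_nonneg fun _ _ => sq_nonneg _)).1 (by linarith))
  have hc : ∀ j ≠ k, x j = (∑ i, (x i)⁺) / (Fintype.card ι - 1) :=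
    fun j => apply_eq_of_card_mul_sum_negPart_sq_eq hx hk (by rw [hb, hx1]; field_simp)
  set m := (∑ i, (x i)⁺) / (Fintype.card ι - 1)
  have hxu := eq_smul_centeredNegSingle hx hc
  have hnorm : ∑ j, (((Fintype.card ι * m) • centeredNegSingle k) j) ^ 2 = 1 := hxu ▸ hx1
  have hm0 : 0 ≤ m := div_nonneg (sum_nonneg fun _ _ => posPart_nonneg _)
    (sub_nonneg.2 (by exact_mod_cast Fintype.card_pos_iff.2 ⟨k⟩))
  have hm : 0 < m := hm0.lt_of_ne fun h => by
    rw [← h, mul_zero, zero_smul] at hnorm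
    simp at hnorm
  have hscale := eq_sqrt_of_sum_sq_smul_centeredNegSingle_eq_one (mul_nonneg hcard.le hm0) hnorm
  refine ⟨hscale ▸ hxu, eq_single_of_sum_mul_eq_zero (fun j => posPart_nonneg _) (fun j hj => ?_)
    hy hy1 hay⟩
  rw [hc j hj]
  exact hm.trans_le (le_posPart m)

end SumZero

lemma vnorm_eq_one_iff {n : ℕ} {v : Fin n → ℝ} : vnorm v = 1 ↔ ∑ j, v j ^ 2 = 1 := by
  simp only [vnorm, Real.sqrt_eq_one, dotProduct, sq]

section SchurCone

variable {n : ℕ} {x : Fin n → ℝ}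

lemma sum_eq_zero_of_mem_schurCone (hx : x ∈ schurCone n) : ∑ j, x j = 0 := by
  obtain ⟨c, -, rfl⟩ := hx
  simp only [Finset.sum_apply, Pi.smul_apply, smul_eq_mul]
  rw [Finset.sum_comm]
  refine Finset.sum_eq_zero fun i _ => ?_
  have hi : (i : ℕ) + 1 < n := by omega
  rw [← Finset.mul_sum, Fin.sum_univ_eq_sum_range
    (fun m => if m = (i : ℕ) then (1 : ℝ) else if m = (i : ℕ) + 1 then -1 else 0)]
  simp [Finset.sum_ite, hi, (Nat.lt_succ_self _).trans hi]

lemma apply_nonpos_of_mem_schurCone (hx : x ∈ schurCone n) (k : Fin n) (hk : (k : ℕ) = n - 1) :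
    x k ≤ 0 := by
  obtain ⟨c, hc, rfl⟩ := hx
  rw [Finset.sum_apply]
  refine Finset.sum_nonpos fun i _ => ?_
  simp only [Pi.smul_apply, smul_eq_mul, hk, if_neg i.isLt.ne']
  split_ifs
  · linarith [hc i]
  · simp

lemma sum_smul_generator_apply (c : ℕ → ℝ) (j : Fin n) :
    (∑ i : Fin (n - 1), c i • (fun j : Fin n =>
      if (j : ℕ) = (i : ℕ) then (1 : ℝ) else if (j : ℕ) = (i : ℕ) + 1 then -1 else 0)) j =
      (if (j : ℕ) < n - 1 then c j else 0) - if 0 < (j : ℕ) then c (j - 1) else 0 := by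
  obtain ⟨j, hj⟩ := j
  have hgen : ∀ m : ℕ, (if j = m then (1 : ℝ) else if j = m + 1 then -1 else 0) =
      (if m = j then 1 else 0) - if m + 1 = j then 1 else 0 := by
    intro m
    split_ifs <;> first | omega | norm_num
  simp only [Finset.sum_apply, Pi.smul_apply, smul_eq_mul]
  rw [Fin.sum_univ_eq_sum_range
    (fun m => c m * if j = m then (1 : ℝ) else if j = m + 1 then -1 else 0)]
  simp only [hgen, mul_sub, mul_ite, mul_one, mul_zero, Finset.sum_sub_distrib,
    Finset.sum_ite_eq', Finset.mem_range]
  congr 1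
  cases j with
  | zero => simp
  | succ k => simp [show k < n - 1 by omega]

lemma smul_centeredNegSingle_mem_schurCone {c : ℝ} (hc : 0 ≤ c) (k : Fin n)
    (hk : (k : ℕ) = n - 1) : c • centeredNegSingle k ∈ schurCone n := by
  refine ⟨fun i => c * (i + 1) / n, fun i => by positivity, ?_⟩
  funext j
  rw [sum_smul_generator_apply (fun m : ℕ => c * (m + 1) / n), Pi.smul_apply,
    centeredNegSingle_apply, Fintype.card_fin, smul_eq_mul]
  have hn : (n : ℝ) ≠ 0 := by exact_mod_cast (Nat.zero_lt_of_lt j.isLt).ne'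
  have hprev : (if 0 < (j : ℕ) then c * (((j - 1 : ℕ) : ℝ) + 1) / n else 0) = c * j / n := by
    split_ifs with h
    · rw [Nat.cast_sub h]
      push_cast
      ring
    · simp [Nat.eq_zero_of_not_pos h]
  rw [hprev]
  by_cases hj : j = k
  · have hj' : (j : ℕ) = n - 1 := by rw [hj, hk]
    have hjR : ((j : ℕ) : ℝ) = n - 1 := by
      rw [hj', Nat.cast_sub (Nat.zero_lt_of_lt j.isLt), Nat.cast_one]
    rw [if_neg (show ¬(j : ℕ) < n - 1 by omega), if_pos hj, hjR]
    field_simp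
    ring
  · have : (j : ℕ) < n - 1 := by
      have := Fin.val_ne_of_ne hj
      omega
    rw [if_pos this, if_neg hj]
    field_simp
    ring

end SchurCone

/-- The maximal angle between the Schur cone and the nonnegative orthant:
`min ⟨x,y⟩ = −√(1−1/n)`, attained uniquely at `y = e_n`, `x = √(n/(n−1))(e/n − e_n)`. -/
theorem stmt15 {n : ℕ} (hn : 2 ≤ n) :
    (∀ x y : Fin n → ℝ, x ∈ schurCone n → vnorm x = 1 → (∀ j, 0 ≤ y j) → vnorm y = 1 →
      -Real.sqrt (1 - 1 / (n : ℝ)) ≤ x ⬝ᵥ y) ∧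
    (Real.sqrt ((n : ℝ) / ((n : ℝ) - 1)) •
        (((n : ℝ))⁻¹ • (fun _ : Fin n => (1 : ℝ)) -
          Pi.single (⟨n - 1, by omega⟩ : Fin n) 1)) ∈ schurCone n ∧
    vnorm (Real.sqrt ((n : ℝ) / ((n : ℝ) - 1)) •
        (((n : ℝ))⁻¹ • (fun _ : Fin n => (1 : ℝ)) -
          Pi.single (⟨n - 1, by omega⟩ : Fin n) 1)) = 1 ∧
    (∀ j, 0 ≤ (Pi.single (⟨n - 1, by omega⟩ : Fin n) 1 : Fin n → ℝ) j) ∧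
    vnorm (Pi.single (⟨n - 1, by omega⟩ : Fin n) 1 : Fin n → ℝ) = 1 ∧
    (Real.sqrt ((n : ℝ) / ((n : ℝ) - 1)) •
        (((n : ℝ))⁻¹ • (fun _ : Fin n => (1 : ℝ)) -
          Pi.single (⟨n - 1, by omega⟩ : Fin n) 1)) ⬝ᵥ
        (Pi.single (⟨n - 1, by omega⟩ : Fin n) 1 : Fin n → ℝ) =
      -Real.sqrt (1 - 1 / (n : ℝ)) ∧
    (∀ x y : Fin n → ℝ, x ∈ schurCone n → vnorm x = 1 → (∀ j, 0 ≤ y j) → vnorm y = 1 →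
      x ⬝ᵥ y = -Real.sqrt (1 - 1 / (n : ℝ)) →
      x = Real.sqrt ((n : ℝ) / ((n : ℝ) - 1)) •
          (((n : ℝ))⁻¹ • (fun _ : Fin n => (1 : ℝ)) -
            Pi.single (⟨n - 1, by omega⟩ : Fin n) 1) ∧
      y = (Pi.single (⟨n - 1, by omega⟩ : Fin n) 1 : Fin n → ℝ)) := by
  set k : Fin n := ⟨n - 1, by omega⟩
  have hu : (n : ℝ)⁻¹ • (fun _ : Fin n => (1 : ℝ)) - Pi.single k 1 = centeredNegSingle k := by
    simp only [centeredNegSingle, Fintype.card_fin]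
  have hcard : (Fintype.card (Fin n) : ℝ) = n := by simp
  have hq : 0 < 1 - 1 / (n : ℝ) := by
    rw [sub_pos, div_lt_one (by positivity)]
    exact_mod_cast hn
  have hinv : (n : ℝ) / (n - 1) = (1 - 1 / (n : ℝ))⁻¹ := by
    field_simp
  rw [hu]
  have hschur : ∀ x ∈ schurCone n, ∑ j, x j = 0 ∧ x k ≤ 0 := fun x hx =>
    ⟨sum_eq_zero_of_mem_schurCone hx, apply_nonpos_of_mem_schurCone hx k rfl⟩
  refine ⟨fun x y hx hx1 hy hy1 => ?_,
    smul_centeredNegSingle_mem_schurCone (Real.sqrt_nonneg _) k rfl, ?_,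
    fun j => by rw [Pi.single_apply]; split_ifs <;> norm_num, ?_, ?_,
    fun x y hx hx1 hy hy1 heq => ?_⟩
  · simpa only [hcard, dotProduct] using neg_sqrt_le_sum_mul (hschur x hx).1 (hschur x hx).2
      (vnorm_eq_one_iff.1 hx1) hy (vnorm_eq_one_iff.1 hy1)
  · rw [vnorm_eq_one_iff, sum_sq_smul_centeredNegSingle, hcard, hinv,
      Real.sq_sqrt (inv_nonneg.2 hq.le), inv_mul_cancel₀ hq.ne']
  · rw [vnorm_eq_one_iff, Fintype.sum_eq_single k fun j hj => by simp [hj]]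
    simp
  · rw [dotProduct_single, mul_one, Pi.smul_apply, centeredNegSingle_apply, if_pos rfl, hcard,
      smul_eq_mul, hinv, Real.sqrt_inv, show (n : ℝ)⁻¹ - 1 = -(1 - 1 / n) by ring, mul_neg,
      inv_mul_eq_div, Real.div_sqrt]
  · simpa only [hcard] using eq_of_sum_mul_eq_neg_sqrt (hschur x hx).1 (hschur x hx).2
      (vnorm_eq_one_iff.1 hx1) hy (vnorm_eq_one_iff.1 hy1)
      (by simpa only [hcard, dotProduct] using heq)
end
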